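/- arXiv:0801.2089 — 2 statements merged into one kernel-verified Lean document; each statement's English description precedes it below -/
import Mathlib

section
/- Let Δ, N be positive integers, p an odd prime with p ∤ ΔN, a ∈ ℤ with p ∣ a²ΔN + 1, q an odd prime with q ∤ ΔNp, and x, y ∈ ℤ_q with x² − p·y² = −ΔN. Let c₁, c₂, c₃ ∈ ℤ satisfy c₁ − (y − x) ∈ q·ℤ_q, c₂·p − 1 ∈ q·ℤ_q, c₃ − x ∈ q·ℤ_q. Set f₁ = e₁, f₂ = −c₁·e₂ + e₃, f₃ = −2c₂(aΔN − c₃)·e₂ + e₄, f₄ = q·e₂ in ℍ[ℚ,−ΔN,p]. Then the ℤ-submodule spanned by f₁, f₂, f₃, f₄ equals the set of h ∈ R(N) such that the lower-left entry of φ(h), h viewed in ℍ[ℚ_q,−ΔN,p], lies in q·ℤ_q; this subgroup is the Eichler order R(Nq) of level Nq inside R(N). -/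
open Quaternion

/-- The coefficient-wise inclusion `ℍ[ℚ, -ΔN, p] → ℍ[ℚ_q, -ΔN, p]`. -/
noncomputable def toLoc (q : ℕ) [Fact q.Prime] (Δ N p : ℕ) :
    ℍ[ℚ, -((Δ : ℚ) * N), (p : ℚ)] → ℍ[ℚ_[q], -((Δ : ℚ_[q]) * N), (p : ℚ_[q])] := fun h =>
  ⟨(h.re : ℚ_[q]), (h.imI : ℚ_[q]), (h.imJ : ℚ_[q]), (h.imK : ℚ_[q])⟩

/-- The `ℚ_q`-linear map `φ : ℍ[ℚ_q, -ΔN, p] → M₂(ℚ_q)` sending `α + βi + γj + δk` to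
`!![α + βx − δpy, −βpy + γp + δxp; βy + γ − δx, α − βx + δpy]`. -/
noncomputable def phi (q : ℕ) [Fact q.Prime] (Δ N p : ℕ) (x y : ℤ_[q]) :
    ℍ[ℚ_[q], -((Δ : ℚ_[q]) * N), (p : ℚ_[q])] → Matrix (Fin 2) (Fin 2) ℚ_[q] := fun h =>
  !![h.re + h.imI * (x : ℚ_[q]) - h.imK * (p : ℚ_[q]) * (y : ℚ_[q]),
     -h.imI * (p : ℚ_[q]) * (y : ℚ_[q]) + h.imJ * (p : ℚ_[q]) + h.imK * (x : ℚ_[q]) * (p : ℚ_[q]);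
     h.imI * (y : ℚ_[q]) + h.imJ - h.imK * (x : ℚ_[q]),
     h.re - h.imI * (x : ℚ_[q]) + h.imK * (p : ℚ_[q]) * (y : ℚ_[q])]

/-- Hashimoto's Eichler order `R(N)` of level `N` in `ℍ[ℚ, -ΔN, p]`. -/
def RN (Δ N p : ℕ) (a : ℤ) : Submodule ℤ ℍ[ℚ, -((Δ : ℚ) * N), (p : ℚ)] :=
  Submodule.span ℤ
    {(1 : ℍ[ℚ, -((Δ : ℚ) * N), (p : ℚ)]), ⟨1/2, 0, 1/2, 0⟩, ⟨0, 1/2, 0, 1/2⟩,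
      ⟨0, 0, (a : ℚ) * Δ * N / p, 1 / (p : ℚ)⟩}

set_option maxHeartbeats 1000000 in
/-- `f₁ = e₁`, `f₂ = −c₁e₂ + e₃`, `f₃ = −2c₂(aΔN − c₃)e₂ + e₄`, `f₄ = qe₂` is a basis
of the Eichler order `R(Nq)` inside `R(N)`. -/
theorem stmt_8 (Δ N : ℕ) (hΔ : 0 < Δ) (hN : 0 < N)
    (p : ℕ) (hp : p.Prime) (hp2 : p ≠ 2) (hpΔN : ¬ p ∣ Δ * N)
    (a : ℤ) (ha : (p : ℤ) ∣ a ^ 2 * Δ * N + 1)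
    (q : ℕ) [Fact q.Prime] (hq2 : q ≠ 2) (hq : ¬ q ∣ Δ * N * p)
    (x y : ℤ_[q]) (hxy : x ^ 2 - (p : ℤ_[q]) * y ^ 2 = -((Δ : ℤ_[q]) * N))
    (c₁ c₂ c₃ : ℤ)
    (hc₁ : (q : ℤ_[q]) ∣ ((c₁ : ℤ_[q]) - (y - x)))
    (hc₂ : (q : ℤ_[q]) ∣ ((c₂ : ℤ_[q]) * p - 1))
    (hc₃ : (q : ℤ_[q]) ∣ ((c₃ : ℤ_[q]) - x)) :
    (Submodule.span ℤ
        {(1 : ℍ[ℚ, -((Δ : ℚ) * N), (p : ℚ)]),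
         (-c₁) • (⟨1/2, 0, 1/2, 0⟩ : ℍ[ℚ, -((Δ : ℚ) * N), (p : ℚ)]) + ⟨0, 1/2, 0, 1/2⟩,
         (-(2 * c₂ * (a * Δ * N - c₃))) • (⟨1/2, 0, 1/2, 0⟩ : ℍ[ℚ, -((Δ : ℚ) * N), (p : ℚ)]) +
           ⟨0, 0, (a : ℚ) * Δ * N / p, 1 / (p : ℚ)⟩,
         (q : ℤ) • (⟨1/2, 0, 1/2, 0⟩ : ℍ[ℚ, -((Δ : ℚ) * N), (p : ℚ)])} :
      Set ℍ[ℚ, -((Δ : ℚ) * N), (p : ℚ)]) =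
      {h | h ∈ RN Δ N p a ∧
        ∃ z : ℤ_[q], phi q Δ N p x y (toLoc q Δ N p h) 1 0 = (q : ℚ_[q]) * (z : ℚ_[q])} := by
  have hqp : q.Prime := Fact.out
  have h2 : ((2 : ℤ_[q]) : ℚ_[q]) = 2 := by exact_mod_cast rfl
  have hp0 : (p : ℚ_[q]) ≠ 0 := Nat.cast_ne_zero.mpr hp.ne_zero
  have hpinv : (p : ℚ_[q]) * ((p : ℚ_[q]))⁻¹ = 1 := mul_inv_cancel₀ hp0
  have unit_of : ∀ n : ℕ, ¬ q ∣ n → ∃ u : ℤ_[q], (n : ℤ_[q]) * u = 1 := by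
    intro n hn
    have hd : ¬ ((q : ℤ) ∣ (n : ℤ)) := by exact_mod_cast hn
    have hnorm : ‖((n : ℤ) : ℤ_[q])‖ = 1 :=
      le_antisymm (PadicInt.norm_le_one _)
        (not_lt.mp (by rw [PadicInt.norm_int_lt_one_iff_dvd]; exact hd))
    obtain ⟨u, hu⟩ := (PadicInt.isUnit_iff.mpr hnorm).exists_right_inv
    exact ⟨u, by exact_mod_cast hu⟩
  obtain ⟨u, hu⟩ := unit_of 2
    (fun hdvd => hq2 ((Nat.prime_dvd_prime_iff_eq hqp Nat.prime_two).mp hdvd))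
  obtain ⟨v, hv⟩ := unit_of p (fun hdvd => hq (Dvd.dvd.mul_left hdvd (Δ * N)))
  obtain ⟨t₁, ht₁⟩ := hc₁
  obtain ⟨t₂, ht₂⟩ := hc₂
  obtain ⟨t₃, ht₃⟩ := hc₃
  have hu' : (2 : ℚ_[q]) * (u : ℚ_[q]) = 1 := by
    exact_mod_cast congrArg (fun z : ℤ_[q] => (z : ℚ_[q])) hu
  have hv' : (p : ℚ_[q]) * (v : ℚ_[q]) = 1 := by
    exact_mod_cast congrArg (fun z : ℤ_[q] => (z : ℚ_[q])) hv
  have ht₁' : (c₁ : ℚ_[q]) - ((y : ℚ_[q]) - (x : ℚ_[q])) = (q : ℚ_[q]) * (t₁ : ℚ_[q]) := by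
    exact_mod_cast congrArg (fun z : ℤ_[q] => (z : ℚ_[q])) ht₁
  have ht₂' : (c₂ : ℚ_[q]) * (p : ℚ_[q]) - 1 = (q : ℚ_[q]) * (t₂ : ℚ_[q]) := by
    exact_mod_cast congrArg (fun z : ℤ_[q] => (z : ℚ_[q])) ht₂
  have ht₃' : (c₃ : ℚ_[q]) - (x : ℚ_[q]) = (q : ℚ_[q]) * (t₃ : ℚ_[q]) := by
    exact_mod_cast congrArg (fun z : ℤ_[q] => (z : ℚ_[q])) ht₃
  have hphi : ∀ h : ℍ[ℚ, -((Δ : ℚ) * N), (p : ℚ)],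
      phi q Δ N p x y (toLoc q Δ N p h) 1 0
        = ((h.imI : ℚ_[q]) * (y : ℚ_[q]) + (h.imJ : ℚ_[q]) - (h.imK : ℚ_[q]) * (x : ℚ_[q])) := by
    intro h; simp [phi, toLoc]
  ext h
  simp only [SetLike.mem_coe, Set.mem_setOf_eq, hphi]
  constructor
  · intro hh
    refine Submodule.span_induction ?_ ?_ ?_ ?_ hh
    · rintro w hw
      simp only [Set.mem_insert_iff, Set.mem_singleton_iff] at hw
      rcases hw with rfl | rfl | rfl | rfl
      · refine ⟨Submodule.subset_span (by simp), 0, by simp⟩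
      · refine ⟨Submodule.add_mem _
          (Submodule.smul_mem _ _ (Submodule.subset_span (by simp)))
          (Submodule.subset_span (by simp)), (-t₁) * u, ?_⟩
        simp only [QuaternionAlgebra.re_add, QuaternionAlgebra.imI_add, QuaternionAlgebra.imJ_add,
          QuaternionAlgebra.imK_add, QuaternionAlgebra.re_mul, QuaternionAlgebra.imI_mul,
          QuaternionAlgebra.imJ_mul, QuaternionAlgebra.imK_mul, QuaternionAlgebra.re_intCast,
          QuaternionAlgebra.imI_intCast, QuaternionAlgebra.imJ_intCast,
          QuaternionAlgebra.imK_intCast, QuaternionAlgebra.re_one, QuaternionAlgebra.imI_one,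
          QuaternionAlgebra.imJ_one, QuaternionAlgebra.imK_one, zsmul_eq_mul]
        push_cast
        linear_combination (-1/2 : ℚ_[q]) * ht₁' + ((q : ℚ_[q]) * t₁ / 2) * hu'
      · refine ⟨Submodule.add_mem _
          (Submodule.smul_mem _ _ (Submodule.subset_span (by simp)))
          (Submodule.subset_span (by simp)),
          (t₃ - t₂ * ((a : ℤ_[q]) * Δ * N - c₃)) * v, ?_⟩
        simp only [QuaternionAlgebra.re_add, QuaternionAlgebra.imI_add, QuaternionAlgebra.imJ_add,
          QuaternionAlgebra.imK_add, QuaternionAlgebra.re_mul, QuaternionAlgebra.imI_mul,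
          QuaternionAlgebra.imJ_mul, QuaternionAlgebra.imK_mul, QuaternionAlgebra.re_intCast,
          QuaternionAlgebra.imI_intCast, QuaternionAlgebra.imJ_intCast,
          QuaternionAlgebra.imK_intCast, QuaternionAlgebra.re_one, QuaternionAlgebra.imI_one,
          QuaternionAlgebra.imJ_one, QuaternionAlgebra.imK_one, zsmul_eq_mul]
        push_cast
        linear_combination (-(((a : ℚ_[q]) * Δ * N - c₃)) / p) * ht₂' + (1 / (p : ℚ_[q])) * ht₃'
          + (((q : ℚ_[q]) * t₂ * ((a : ℚ_[q]) * Δ * N - c₃) - (q : ℚ_[q]) * t₃) / p) * hv'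
          + ((c₂ : ℚ_[q]) * a * Δ * N - (c₂ : ℚ_[q]) * c₃ - (a : ℚ_[q]) * Δ * N * q * t₂ * v
              + (c₃ : ℚ_[q]) * q * t₂ * v + (q : ℚ_[q]) * t₃ * v) * hpinv
      · refine ⟨Submodule.smul_mem _ _ (Submodule.subset_span (by simp)), u, ?_⟩
        simp only [QuaternionAlgebra.re_add, QuaternionAlgebra.imI_add, QuaternionAlgebra.imJ_add,
          QuaternionAlgebra.imK_add, QuaternionAlgebra.re_mul, QuaternionAlgebra.imI_mul,
          QuaternionAlgebra.imJ_mul, QuaternionAlgebra.imK_mul, QuaternionAlgebra.re_intCast,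
          QuaternionAlgebra.imI_intCast, QuaternionAlgebra.imJ_intCast,
          QuaternionAlgebra.imK_intCast, QuaternionAlgebra.re_one, QuaternionAlgebra.imI_one,
          QuaternionAlgebra.imJ_one, QuaternionAlgebra.imK_one, zsmul_eq_mul]
        push_cast
        linear_combination (-(q : ℚ_[q]) / 2) * hu'
    · exact ⟨Submodule.zero_mem _, 0, by simp⟩
    · rintro w₁ w₂ _ _ ⟨m₁, z₁, hz₁⟩ ⟨m₂, z₂, hz₂⟩
      refine ⟨Submodule.add_mem _ m₁ m₂, z₁ + z₂, ?_⟩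
      simp only [QuaternionAlgebra.re_add, QuaternionAlgebra.imI_add, QuaternionAlgebra.imJ_add,
          QuaternionAlgebra.imK_add, QuaternionAlgebra.re_mul, QuaternionAlgebra.imI_mul,
          QuaternionAlgebra.imJ_mul, QuaternionAlgebra.imK_mul, QuaternionAlgebra.re_intCast,
          QuaternionAlgebra.imI_intCast, QuaternionAlgebra.imJ_intCast,
          QuaternionAlgebra.imK_intCast, QuaternionAlgebra.re_one, QuaternionAlgebra.imI_one,
          QuaternionAlgebra.imJ_one, QuaternionAlgebra.imK_one, zsmul_eq_mul]
      push_cast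
      linear_combination hz₁ + hz₂
    · rintro n w _ ⟨m, z, hz⟩
      refine ⟨Submodule.smul_mem _ _ m, n • z, ?_⟩
      simp only [QuaternionAlgebra.re_add, QuaternionAlgebra.imI_add, QuaternionAlgebra.imJ_add,
          QuaternionAlgebra.imK_add, QuaternionAlgebra.re_mul, QuaternionAlgebra.imI_mul,
          QuaternionAlgebra.imJ_mul, QuaternionAlgebra.imK_mul, QuaternionAlgebra.re_intCast,
          QuaternionAlgebra.imI_intCast, QuaternionAlgebra.imJ_intCast,
          QuaternionAlgebra.imK_intCast, QuaternionAlgebra.re_one, QuaternionAlgebra.imI_one,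
          QuaternionAlgebra.imJ_one, QuaternionAlgebra.imK_one, zsmul_eq_mul]
      push_cast
      linear_combination (n : ℚ_[q]) * hz
  · rintro ⟨hRN, z, hz⟩
    rw [RN, Submodule.mem_span_insert] at hRN
    obtain ⟨α, w₁, hw₁, rfl⟩ := hRN
    rw [Submodule.mem_span_insert] at hw₁
    obtain ⟨β, w₂, hw₂, rfl⟩ := hw₁
    rw [Submodule.mem_span_insert] at hw₂
    obtain ⟨γ, w₃, hw₃, rfl⟩ := hw₂
    rw [Submodule.mem_span_singleton] at hw₃
    obtain ⟨δ, rfl⟩ := hw₃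
    simp only [QuaternionAlgebra.re_add, QuaternionAlgebra.imI_add, QuaternionAlgebra.imJ_add,
          QuaternionAlgebra.imK_add, QuaternionAlgebra.re_mul, QuaternionAlgebra.imI_mul,
          QuaternionAlgebra.imJ_mul, QuaternionAlgebra.imK_mul, QuaternionAlgebra.re_intCast,
          QuaternionAlgebra.imI_intCast, QuaternionAlgebra.imJ_intCast,
          QuaternionAlgebra.imK_intCast, QuaternionAlgebra.re_one, QuaternionAlgebra.imI_one,
          QuaternionAlgebra.imJ_one, QuaternionAlgebra.imK_one, zsmul_eq_mul] at hz
    push_cast at hz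
    have hdvd : (q : ℤ) ∣ (β + γ * c₁ + 2 * c₂ * δ * (a * Δ * N - c₃)) := by
      have hwq : ((β + γ * c₁ + 2 * c₂ * δ * (a * Δ * N - c₃) : ℤ) : ℤ_[q])
          = q * (2 * c₂ * p * z - β * t₂ + γ * t₁ - γ * t₂ * (y - x) - 2 * c₂ * δ * t₃) := by
        have : ∀ z₁ z₂ : ℤ_[q], ((z₁ : ℚ_[q]) = (z₂ : ℚ_[q])) → z₁ = z₂ :=
          fun z₁ z₂ hzz => Subtype.coe_injective hzz
        apply this
        push_cast [h2]
        linear_combination (2 * (c₂ : ℚ_[q]) * p) * hz + (γ : ℚ_[q]) * ht₁'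
          + (-(β : ℚ_[q]) - (γ : ℚ_[q]) * ((y : ℚ_[q]) - (x : ℚ_[q]))) * ht₂'
          + (-2 * (c₂ : ℚ_[q]) * (δ : ℚ_[q])) * ht₃'
          + (-2 * (c₂ : ℚ_[q]) * (δ : ℚ_[q]) * ((a : ℚ_[q]) * Δ * N - (x : ℚ_[q]))) * hpinv
      have hdv : (q : ℤ_[q]) ∣ ((β + γ * c₁ + 2 * c₂ * δ * (a * Δ * N - c₃) : ℤ) : ℤ_[q]) :=
        ⟨_, hwq⟩
      exact (PadicInt.norm_int_lt_one_iff_dvd _).mp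
        ((PadicInt.norm_lt_one_iff_dvd _).mpr hdv)
    obtain ⟨m, hm⟩ := hdvd
    have hβ : (β : ℚ) = q * m - γ * c₁ - 2 * c₂ * δ * (a * Δ * N - c₃) := by
      have : (β : ℤ) = q * m - γ * c₁ - 2 * c₂ * δ * (a * Δ * N - c₃) := by linarith [hm]
      exact_mod_cast this
    have hrep : α • (1 : ℍ[ℚ, -((Δ : ℚ) * N), (p : ℚ)]) + (β • (⟨1/2, 0, 1/2, 0⟩ :
          ℍ[ℚ, -((Δ : ℚ) * N), (p : ℚ)]) + (γ • (⟨0, 1/2, 0, 1/2⟩ :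
          ℍ[ℚ, -((Δ : ℚ) * N), (p : ℚ)]) + δ • (⟨0, 0, (a : ℚ) * Δ * N / p, 1 / (p : ℚ)⟩ :
          ℍ[ℚ, -((Δ : ℚ) * N), (p : ℚ)])))
        = α • (1 : ℍ[ℚ, -((Δ : ℚ) * N), (p : ℚ)])
          + (γ • ((-c₁) • (⟨1/2, 0, 1/2, 0⟩ : ℍ[ℚ, -((Δ : ℚ) * N), (p : ℚ)]) + ⟨0, 1/2, 0, 1/2⟩)
          + (δ • ((-(2 * c₂ * (a * Δ * N - c₃))) • (⟨1/2, 0, 1/2, 0⟩ :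
              ℍ[ℚ, -((Δ : ℚ) * N), (p : ℚ)]) + ⟨0, 0, (a : ℚ) * Δ * N / p, 1 / (p : ℚ)⟩)
          + m • ((q : ℤ) • (⟨1/2, 0, 1/2, 0⟩ : ℍ[ℚ, -((Δ : ℚ) * N), (p : ℚ)])))) := by
      refine QuaternionAlgebra.ext ?_ ?_ ?_ ?_ <;>
        simp only [QuaternionAlgebra.re_add, QuaternionAlgebra.imI_add, QuaternionAlgebra.imJ_add,
          QuaternionAlgebra.imK_add, QuaternionAlgebra.re_mul, QuaternionAlgebra.imI_mul,
          QuaternionAlgebra.imJ_mul, QuaternionAlgebra.imK_mul, QuaternionAlgebra.re_intCast,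
          QuaternionAlgebra.imI_intCast, QuaternionAlgebra.imJ_intCast,
          QuaternionAlgebra.imK_intCast, QuaternionAlgebra.re_one, QuaternionAlgebra.imI_one,
          QuaternionAlgebra.imJ_one, QuaternionAlgebra.imK_one, zsmul_eq_mul] <;> push_cast <;> first
        | ring1
        | linear_combination hβ / 2
    rw [hrep]
    refine Submodule.add_mem _ (Submodule.smul_mem _ _ (Submodule.subset_span (by simp)))
      (Submodule.add_mem _ (Submodule.smul_mem _ _ (Submodule.subset_span (by simp)))
        (Submodule.add_mem _ (Submodule.smul_mem _ _ (Submodule.subset_span (by simp)))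
          (Submodule.smul_mem _ _ (Submodule.subset_span (by simp)))))
end

section
/- Let Δ, N be positive integers, p an odd prime with p ∤ ΔN, a ∈ ℤ with p ∣ a²ΔN + 1, q an odd prime with q ∤ ΔNp, and x, y ∈ ℤ_q with x² − p·y² = −ΔN. Let c₁, c₂, c₃ ∈ ℤ satisfy c₁ − (y − x) ∈ q·ℤ_q, c₂·p − 1 ∈ q·ℤ_q, c₃ − x ∈ q·ℤ_q. Set g₁ = e₁, g₂ = c₁·e₂ + e₃, g₃ = −2c₂(aΔN + c₃)·e₂ + e₄, g₄ = q·e₂ in ℍ[ℚ,−ΔN,p]. Then the ℤ-submodule spanned by g₁, g₂, g₃, g₄ equals the set of h ∈ R(N) such that the upper-right entry of φ(h), h viewed in ℍ[ℚ_q,−ΔN,p], lies in q·ℤ_q; this subgroup is the conjugate Eichler order δ_q R(Nq) δ_q⁻¹ inside R(N). -/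
open Quaternion

lemma mem_span_four {R M : Type*} [CommRing R] [AddCommGroup M] [Module R M] (v1 v2 v3 v4 w : M) :
    w ∈ Submodule.span R ({v1, v2, v3, v4} : Set M) ↔
      ∃ c1 c2 c3 c4 : R, c1 • v1 + c2 • v2 + c3 • v3 + c4 • v4 = w := by
  have hs : ({v1, v2, v3, v4} : Set M) = Set.range ![v1, v2, v3, v4] := by
    ext z
    simp [Matrix.range_cons, Matrix.range_empty]
    tauto
  rw [hs, Submodule.mem_span_range_iff_exists_fun]
  constructor
  · rintro ⟨c, hc⟩
    exact ⟨c 0, c 1, c 2, c 3, by simpa [Fin.sum_univ_four] using hc⟩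
  · rintro ⟨c1, c2, c3, c4, h⟩
    exact ⟨![c1, c2, c3, c4], by simpa [Fin.sum_univ_four] using h⟩

/-- Key computation: for an integral combination of `e₁,…,e₄`, twice the upper-right entry
of `φ` is the `q`-adic integer `p·m₂ + p·m₃(x−y) + 2m₄(aΔN+x)`. -/
lemma phi_entry_eq (Δ N p : ℕ) (hp : p.Prime) (q : ℕ) [Fact q.Prime]
    (a : ℤ) (x y : ℤ_[q]) (m1 m2 m3 m4 : ℤ) :
    2 * phi q Δ N p x y (toLoc q Δ N p
      (m1 • (1 : ℍ[ℚ, -((Δ : ℚ) * N), (p : ℚ)]) + m2 • ⟨1/2, 0, 1/2, 0⟩ + m3 • ⟨0, 1/2, 0, 1/2⟩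
        + m4 • ⟨0, 0, (a : ℚ) * Δ * N / p, 1 / (p : ℚ)⟩)) 0 1
    = (((p : ℤ_[q]) * m2 + p * m3 * (x - y)
        + (m4 * ((a : ℤ_[q]) * Δ * N + x) + m4 * ((a : ℤ_[q]) * Δ * N + x)) : ℤ_[q]) : ℚ_[q]) := by
  have hpq : (p : ℚ_[q]) ≠ 0 := Nat.cast_ne_zero.mpr hp.ne_zero
  simp only [phi, toLoc, Matrix.of_apply, Matrix.cons_val', Matrix.cons_val_one, Matrix.head_cons,
    Matrix.empty_val', Matrix.cons_val_fin_one, Matrix.cons_val_zero,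
    QuaternionAlgebra.re_add, QuaternionAlgebra.imI_add, QuaternionAlgebra.imJ_add,
    QuaternionAlgebra.imK_add, QuaternionAlgebra.re_smul, QuaternionAlgebra.imI_smul,
    QuaternionAlgebra.imJ_smul, QuaternionAlgebra.imK_smul, QuaternionAlgebra.re_one,
    QuaternionAlgebra.imI_one, QuaternionAlgebra.imJ_one, QuaternionAlgebra.imK_one]
  simp only [zsmul_eq_mul]
  push_cast
  field_simp
  ring

set_option maxHeartbeats 1000000 in
/-- `g₁ = e₁`, `g₂ = c₁e₂ + e₃`, `g₃ = −2c₂(aΔN + c₃)e₂ + e₄`, `g₄ = qe₂` is a basis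
of the conjugate Eichler order `δ_q R(Nq) δ_q⁻¹` inside `R(N)`. -/
theorem stmt_9 (Δ N : ℕ) (hΔ : 0 < Δ) (hN : 0 < N)
    (p : ℕ) (hp : p.Prime) (hp2 : p ≠ 2) (hpΔN : ¬ p ∣ Δ * N)
    (a : ℤ) (ha : (p : ℤ) ∣ a ^ 2 * Δ * N + 1)
    (q : ℕ) [Fact q.Prime] (hq2 : q ≠ 2) (hq : ¬ q ∣ Δ * N * p)
    (x y : ℤ_[q]) (hxy : x ^ 2 - (p : ℤ_[q]) * y ^ 2 = -((Δ : ℤ_[q]) * N))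
    (c₁ c₂ c₃ : ℤ)
    (hc₁ : (q : ℤ_[q]) ∣ ((c₁ : ℤ_[q]) - (y - x)))
    (hc₂ : (q : ℤ_[q]) ∣ ((c₂ : ℤ_[q]) * p - 1))
    (hc₃ : (q : ℤ_[q]) ∣ ((c₃ : ℤ_[q]) - x)) :
    (Submodule.span ℤ
        {(1 : ℍ[ℚ, -((Δ : ℚ) * N), (p : ℚ)]),
         c₁ • (⟨1/2, 0, 1/2, 0⟩ : ℍ[ℚ, -((Δ : ℚ) * N), (p : ℚ)]) + ⟨0, 1/2, 0, 1/2⟩,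
         (-(2 * c₂ * (a * Δ * N + c₃))) • (⟨1/2, 0, 1/2, 0⟩ : ℍ[ℚ, -((Δ : ℚ) * N), (p : ℚ)]) +
           ⟨0, 0, (a : ℚ) * Δ * N / p, 1 / (p : ℚ)⟩,
         (q : ℤ) • (⟨1/2, 0, 1/2, 0⟩ : ℍ[ℚ, -((Δ : ℚ) * N), (p : ℚ)])} :
      Set ℍ[ℚ, -((Δ : ℚ) * N), (p : ℚ)]) =
      {h | h ∈ RN Δ N p a ∧
        ∃ z : ℤ_[q], phi q Δ N p x y (toLoc q Δ N p h) 0 1 = (q : ℚ_[q]) * (z : ℚ_[q])} := by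
  obtain ⟨w1, hw1⟩ := hc₁
  obtain ⟨w2, hw2⟩ := hc₂
  obtain ⟨w3, hw3⟩ := hc₃
  have hqd2 : ¬ ((q : ℤ) ∣ 2) := by
    intro hd
    have : q ∣ 2 := by exact_mod_cast hd
    exact hq2 ((Nat.prime_dvd_prime_iff_eq Fact.out Nat.prime_two).mp this)
  have hu2 : IsUnit (2 : ℤ_[q]) := by
    rw [PadicInt.isUnit_iff]
    refine le_antisymm (PadicInt.norm_le_one _) (not_lt.mp fun hlt => hqd2 ?_)
    exact (PadicInt.norm_int_lt_one_iff_dvd 2).mp (by simpa using hlt)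
  obtain ⟨u, hu⟩ := hu2
  have hinv : ((u⁻¹ : (ℤ_[q])ˣ) : ℤ_[q]) * 2 = 1 := by rw [← hu]; exact u.inv_mul
  have h2ne : (2 : ℚ_[q]) ≠ 0 := two_ne_zero
  ext h
  rw [SetLike.mem_coe, mem_span_four, Set.mem_setOf_eq]
  constructor
  · rintro ⟨d1, d2, d3, d4, rfl⟩
    set t : ℤ := -(2 * c₂ * (a * Δ * N + c₃)) with ht
    have hE : d1 • (1 : ℍ[ℚ, -((Δ : ℚ) * N), (p : ℚ)]) +
        d2 • (c₁ • (⟨1/2, 0, 1/2, 0⟩ : ℍ[ℚ, -((Δ : ℚ) * N), (p : ℚ)]) + ⟨0, 1/2, 0, 1/2⟩) +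
        d3 • (t • (⟨1/2, 0, 1/2, 0⟩ : ℍ[ℚ, -((Δ : ℚ) * N), (p : ℚ)]) +
          ⟨0, 0, (a : ℚ) * Δ * N / p, 1 / (p : ℚ)⟩) +
        d4 • ((q : ℤ) • (⟨1/2, 0, 1/2, 0⟩ : ℍ[ℚ, -((Δ : ℚ) * N), (p : ℚ)]))
        = d1 • (1 : ℍ[ℚ, -((Δ : ℚ) * N), (p : ℚ)]) +
          (d2 * c₁ + d3 * t + d4 * q) • (⟨1/2, 0, 1/2, 0⟩ : ℍ[ℚ, -((Δ : ℚ) * N), (p : ℚ)]) +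
          d2 • (⟨0, 1/2, 0, 1/2⟩ : ℍ[ℚ, -((Δ : ℚ) * N), (p : ℚ)]) +
          d3 • (⟨0, 0, (a : ℚ) * Δ * N / p, 1 / (p : ℚ)⟩ : ℍ[ℚ, -((Δ : ℚ) * N), (p : ℚ)]) := by
      ext <;> simp <;> push_cast <;> ring
    constructor
    · rw [hE, RN, mem_span_four]
      exact ⟨d1, d2 * c₁ + d3 * t + d4 * q, d2, d3, rfl⟩
    · set Z : ℤ_[q] := d2 * p * w1 + d3 * (-(2 * w2 * ((a : ℤ_[q]) * Δ * N + c₃)) - 2 * w3)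
          + d4 * p with hZ
      have hkey := phi_entry_eq Δ N p hp q a x y d1 (d2 * c₁ + d3 * t + d4 * q) d2 d3
      rw [hE]
      have hG : ((p : ℤ_[q]) * ((d2 * c₁ + d3 * t + d4 * q : ℤ) : ℤ_[q])
            + p * d2 * (x - y)
            + ((d3 : ℤ_[q]) * ((a : ℤ_[q]) * Δ * N + x) + d3 * ((a : ℤ_[q]) * Δ * N + x)))
          = (q : ℤ_[q]) * Z := by
        rw [hZ, ht]
        push_cast
        linear_combination ((p : ℤ_[q]) * d2) * hw1
          + (-(2 * ((a : ℤ_[q]) * Δ * N + c₃) * d3)) * hw2 + (-(2 * (d3 : ℤ_[q]))) * hw3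
      refine ⟨Z * (u⁻¹ : (ℤ_[q])ˣ), ?_⟩
      refine mul_left_cancel₀ h2ne ?_
      rw [hkey, hG]
      have hinvQ : ((((u⁻¹ : (ℤ_[q])ˣ) : ℤ_[q]) : ℚ_[q])) * 2 = 1 := by
        exact_mod_cast congrArg (fun z : ℤ_[q] => (z : ℚ_[q])) hinv
      push_cast
      linear_combination (-((q : ℚ_[q]) * ((Z : ℤ_[q]) : ℚ_[q]))) * hinvQ
  · rintro ⟨hRN, z, hz⟩
    rw [RN, mem_span_four] at hRN
    obtain ⟨m1, m2, m3, m4, hm⟩ := hRN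
    set t : ℤ := -(2 * c₂ * (a * Δ * N + c₃)) with ht
    have hkey := phi_entry_eq Δ N p hp q a x y m1 m2 m3 m4
    rw [hm, hz] at hkey
    have hGz : ((p : ℤ_[q]) * m2 + p * m3 * (x - y)
          + ((m4 : ℤ_[q]) * ((a : ℤ_[q]) * Δ * N + x) + m4 * ((a : ℤ_[q]) * Δ * N + x)))
        = (q : ℤ_[q]) * (z + z) := by
      have h2 : (((q : ℤ_[q]) * (z + z) : ℤ_[q]) : ℚ_[q])
          = 2 * ((q : ℚ_[q]) * (z : ℚ_[q])) := by push_cast; ring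
      exact Subtype.coe_injective (hkey.symm.trans h2.symm)
    have hdvd : (q : ℤ) ∣ (m2 - c₁ * m3 - t * m4) := by
      have hdq : (q : ℤ_[q]) ∣ ((m2 - c₁ * m3 - t * m4 : ℤ) : ℤ_[q]) := by
        refine ⟨(c₂ : ℤ_[q]) * (z + z) - m2 * w2 - m3 * (w1 + (x - y) * w2)
          + 2 * c₂ * m4 * w3, ?_⟩
        rw [ht]
        push_cast
        linear_combination (c₂ : ℤ_[q]) * hGz - (m2 : ℤ_[q]) * hw2 - (m3 : ℤ_[q]) * hw1
          - ((m3 : ℤ_[q]) * (x - y)) * hw2 + (2 * (c₂ : ℤ_[q]) * m4) * hw3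
      exact (PadicInt.norm_int_lt_one_iff_dvd _).mp ((PadicInt.norm_lt_one_iff_dvd _).mpr hdq)
    obtain ⟨k, hk⟩ := hdvd
    refine ⟨m1, m3, m4, k, ?_⟩
    rw [← hm]
    have hkQ : (m2 : ℚ) = c₁ * m3 + t * m4 + q * k := by
      have h3 : ((m2 - c₁ * m3 - t * m4 : ℤ) : ℚ) = ((q * k : ℤ) : ℚ) := by exact_mod_cast hk
      push_cast at h3
      linarith
    ext <;> simp <;> push_cast [hkQ, ht] <;> ring
end
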